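/- arXiv:1901.00493 — 4 statements merged into one kernel-verified Lean document; each statement's English description precedes it below -/
import Mathlib

section
/- As formal power series, (∏_{m≥1} (1 - x^m)) · (∑_{n≥0} ρ(n) x^n) = ∑_{h≥0} x^h · ∏_{m≥1, m≠h} (1 - x^m), where for h = 0 the product on the right is over all m ≥ 1. -/
/-- Coefficient of `x^n` in Euler's product `∏_{m ≥ 1} (1 - x^m)` (the pentagonal
number theorem sequence); factors with `m > n` do not affect this coefficient, so the
product may be truncated at `m = n`. -/
noncomputable def sigma0 (n : ℕ) : ℤ :=
  PowerSeries.coeff (R := ℤ) n (∏ m ∈ Finset.Icc 1 n, (1 - PowerSeries.X ^ m))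

/-- Coefficient of `x^n` in `∏_{m ≥ 1, m ≠ j} (1 - x^m)` (the `j`-laced sequence);
for `j = 0` this is the full Euler product. -/
noncomputable def sigmaJ (j n : ℕ) : ℤ :=
  PowerSeries.coeff (R := ℤ) n (∏ m ∈ (Finset.Icc 1 n).erase j, (1 - PowerSeries.X ^ m))

/-- `ρ(0) = 1`, and for `n ≥ 1`, `ρ(n)` is the number of positive divisors of `n`. -/
def rho (n : ℕ) : ℤ := if n = 0 then 1 else (n.divisors.card : ℤ)

/-- Integer-indexed `ρ`, vanishing on negative arguments. -/
def rhoZ (m : ℤ) : ℤ := if 0 ≤ m then rho m.toNat else 0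

/-- The σ-sequence: `σ(n) = ∑_{j=0}^{n} σ_j(n - j)`, the coefficient of `x^n` in the
σ-function `∑_{h ≥ 0} x^h ∏_{m ≥ 1, m ≠ h} (1 - x^m)`. -/
noncomputable def sigmaSeq (n : ℕ) : ℤ := ∑ j ∈ Finset.range (n+1), sigmaJ j (n - j)

/-!
Since `(1 - x^h) · ∑_k x^(hk) = 1`, for `h ≥ 1` the summand `x^h ∏_{m ≠ h} (1 - x^m)` equals
`∏_m (1 - x^m) · x^h / (1 - x^h)`. The Lambert series `∑_{h ≥ 1} x^h / (1 - x^h)` is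
`∑_{n ≥ 1} ρ(n) x^n`, and the `h = 0` summand supplies the constant term `ρ(0) = 1`.
-/

open PowerSeries Finset

section

variable {R : Type*}

theorem PowerSeries.coeff_mul_congr_right [Semiring R] {n : ℕ} (p : R⟦X⟧) {f g : R⟦X⟧}
    (h : ∀ k ≤ n, coeff k f = coeff k g) : coeff n (p * f) = coeff n (p * g) := by
  simp only [coeff_mul]
  exact sum_congr rfl fun x hx => by rw [h x.2 (by have := mem_antidiagonal.mp hx; omega)]

variable (R) [CommRing R]

noncomputable def multiplesSeries (h : ℕ) : R⟦X⟧ :=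
  PowerSeries.mk fun j => if h ∣ j then 1 else 0

variable {R}

theorem one_sub_X_pow_mul_multiplesSeries {h : ℕ} (hh : 0 < h) :
    (1 - X ^ h) * multiplesSeries R h = 1 := by
  ext k
  rw [sub_mul, one_mul, map_sub, coeff_X_pow_mul', multiplesSeries, coeff_mk, coeff_mk,
    coeff_one]
  rcases le_or_gt h k with hle | hlt
  · have hdvd : h ∣ k - h ↔ h ∣ k := Nat.dvd_sub_iff_left hle dvd_rfl
    have hk0 : k ≠ 0 := by omega
    simp [hle, hdvd, hk0]
  · have hdvd : h ∣ k ↔ k = 0 := ⟨fun hd => Nat.eq_zero_of_dvd_of_lt hd hlt, by rintro rfl; simp⟩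
    simp [hdvd, not_le.mpr hlt]

theorem X_pow_mul_multiplesSeries {h : ℕ} (hh : 0 < h) :
    X ^ h * multiplesSeries R h = multiplesSeries R h - 1 := by
  linear_combination -one_sub_X_pow_mul_multiplesSeries (R := R) hh

theorem coeff_X_pow_mul_multiplesSeries {h : ℕ} (hh : 0 < h) (k : ℕ) :
    coeff k (X ^ h * multiplesSeries R h) = if h ∈ k.divisors then 1 else 0 := by
  rw [X_pow_mul_multiplesSeries hh, map_sub, multiplesSeries, coeff_mk, coeff_one]
  simp only [Nat.mem_divisors]
  by_cases hk : k = 0 <;> by_cases hd : h ∣ k <;> simp [hk, hd]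

theorem coeff_sum_X_pow_mul_multiplesSeries {n k : ℕ} (hk : k ≤ n) :
    coeff k (∑ d ∈ Icc 1 n, X ^ d * multiplesSeries R d : R⟦X⟧) = k.divisors.card := by
  have hsub : k.divisors ⊆ Icc 1 n := fun d hd =>
    mem_Icc.mpr ⟨Nat.pos_of_mem_divisors hd, (Nat.divisor_le hd).trans hk⟩
  have hterm : ∀ d ∈ Icc 1 n,
      coeff k (X ^ d * multiplesSeries R d) = if d ∈ k.divisors then 1 else 0 :=
    fun d hd => coeff_X_pow_mul_multiplesSeries (mem_Icc.mp hd).1 k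
  rw [map_sum, sum_congr rfl hterm, sum_ite_mem, inter_eq_right.mpr hsub, sum_const, nsmul_one]

theorem prod_one_sub_X_pow_mul_X_pow_mul_multiplesSeries {s : Finset ℕ} {d : ℕ} (hd : d ∈ s)
    (hd0 : 0 < d) :
    (∏ m ∈ s, (1 - X ^ m)) * (X ^ d * multiplesSeries R d) =
      X ^ d * ∏ m ∈ s.erase d, (1 - X ^ m) := by
  rw [← mul_prod_erase s _ hd]
  linear_combination (X ^ d * ∏ m ∈ s.erase d, (1 - X ^ m)) *
    one_sub_X_pow_mul_multiplesSeries (R := R) hd0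

end

theorem coeff_one_add_sum_X_pow_mul_multiplesSeries {n k : ℕ} (hk : k ≤ n) :
    coeff k (1 + ∑ d ∈ Icc 1 n, X ^ d * multiplesSeries ℤ d) = rho k := by
  rw [map_add, coeff_sum_X_pow_mul_multiplesSeries hk, coeff_one, rho]
  rcases eq_or_ne k 0 with rfl | hk0 <;> simp [*]

/-- Coefficientwise form of
`(∏_{m≥1} (1 - x^m)) · (∑_{n≥0} ρ(n) x^n) = ∑_{h≥0} x^h ∏_{m≥1, m≠h} (1 - x^m)`:
in degree `n` the products may be truncated at `m = n` and the sum at `h = n`. -/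
theorem stmt2 (n : ℕ) :
    PowerSeries.coeff (R := ℤ) n
        ((∏ m ∈ Finset.Icc 1 n, (1 - PowerSeries.X ^ m)) *
          PowerSeries.mk (fun k => rho k)) =
    ∑ h ∈ Finset.range (n+1),
      PowerSeries.coeff (R := ℤ) n
        (PowerSeries.X ^ h * ∏ m ∈ (Finset.Icc 1 n).erase h, (1 - PowerSeries.X ^ m)) := by
  have hrange : range (n + 1) = insert 0 (Icc 1 n) := by
    ext h; simp only [mem_range, mem_insert, mem_Icc]; omega
  rw [coeff_mul_congr_right _ fun k hk => (coeff_mk k _).trans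
      (coeff_one_add_sum_X_pow_mul_multiplesSeries hk).symm,
    hrange, sum_insert (by simp), erase_eq_of_notMem (by simp), mul_add, mul_one, mul_sum,
    map_add, map_sum, pow_zero, one_mul]
  congr 1
  exact sum_congr rfl fun d hd => by
    rw [prod_one_sub_X_pow_mul_X_pow_mul_multiplesSeries hd (mem_Icc.mp hd).1]
end

section
/- The coefficient σ_0(n) of x^n in ∏_{m≥1}(1 - x^m) satisfies: σ_0(n) = (-1)^i if n = (3i² + i)/2 for some integer i (positive, negative, or zero), and σ_0(n) = 0 otherwise. -/
/-!
Factors `1 - x^m` with `m > n` are `≡ 1 mod x^(n+1)`, so the truncated product defining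
`sigma0 n` has the same `x^n`-coefficient as the full Euler product, which the pentagonal
number theorem identifies with `pentagonalSeries`. Mathlib indexes pentagonal numbers as
`k(3k-1)/2`, so `n = (3i² + i)/2` reads `n = pentagonal (-i)`.
-/

open PowerSeries Finset

theorem dvd_prod_sub_one {ι R : Type*} [CommRing R] {a : R} {s : Finset ι} {f : ι → R}
    (h : ∀ i ∈ s, a ∣ f i - 1) : a ∣ ∏ i ∈ s, f i - 1 := by
  refine prod_induction f (fun q => a ∣ q - 1) (fun p q hp hq => ?_) (by simp) h
  rw [show p * q - 1 = (p - 1) * q + (q - 1) by ring]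
  exact dvd_add (dvd_mul_of_dvd_left hp q) hq

section Truncation

variable {R : Type*} [CommRing R]

theorem PowerSeries.coeff_mul_of_X_pow_dvd_sub_one {p q : R⟦X⟧} {n : ℕ}
    (h : X ^ (n + 1) ∣ q - 1) : coeff n (p * q) = coeff n p := by
  rw [show p * q = p + p * (q - 1) by ring, map_add,
    X_pow_dvd_iff.1 (dvd_mul_of_dvd_right h p) n n.lt_succ_self, add_zero]

theorem PowerSeries.coeff_prod_one_sub_X_pow_of_range_subset {s : Finset ℕ} {n : ℕ}
    (h : range n ⊆ s) :
    coeff n (∏ m ∈ s, (1 - X ^ (m + 1) : R⟦X⟧)) =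
      coeff n (∏ m ∈ range n, (1 - X ^ (m + 1) : R⟦X⟧)) := by
  rw [← prod_sdiff h, mul_comm]
  refine coeff_mul_of_X_pow_dvd_sub_one (dvd_prod_sub_one fun m hm => ?_)
  have hnm : n ≤ m := by simpa using (mem_sdiff.1 hm).2
  rw [sub_sub_cancel_left, dvd_neg]
  exact pow_dvd_pow X (by omega)

theorem PowerSeries.coeff_prod_range_one_sub_X_pow (n : ℕ) :
    coeff n (∏ m ∈ range n, (1 - X ^ (m + 1) : R⟦X⟧)) = coeff n (pentagonalSeries R) := by
  obtain ⟨s, hs⟩ := Filter.eventually_atTop.1 (coeff_prod_one_sub_X_pow_eventually_eq R n)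
  rw [← coeff_prod_one_sub_X_pow_of_range_subset (subset_union_right : range n ⊆ s ∪ range n),
    hs _ subset_union_left]

end Truncation

theorem sigma0_eq_coeff_pentagonalSeries (n : ℕ) :
    sigma0 n = coeff n (pentagonalSeries ℤ) := by
  rw [sigma0, ← coeff_prod_range_one_sub_X_pow, range_eq_Ico,
    prod_Ico_add' (fun m => (1 - X ^ m : ℤ⟦X⟧)) 0 n 1]
  rfl

theorem pentagonal_neg_eq_iff {n : ℕ} {i : ℤ} :
    pentagonal (-i) = n ↔ 2 * (n : ℤ) = 3 * i ^ 2 + i := by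
  rw [← Nat.cast_inj (R := ℤ), ← mul_right_inj' (two_ne_zero : (2 : ℤ) ≠ 0),
    two_mul_natCast_pentagonal_neg]
  constructor <;> intro h <;> linarith

/-- Euler's pentagonal number theorem: `σ_0(n) = (-1)^i` if `n = (3i² + i)/2` for some
integer `i`, and `σ_0(n) = 0` otherwise.  (The equation `n = (3i²+i)/2` is written
without division as `2n = 3i² + i`, and `(-1)^i` as `(-1)^{|i|}`.) -/
theorem stmt6 (n : ℕ) :
    (∀ i : ℤ, 2 * (n : ℤ) = 3 * i ^ 2 + i → sigma0 n = (-1) ^ i.natAbs) ∧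
    ((¬ ∃ i : ℤ, 2 * (n : ℤ) = 3 * i ^ 2 + i) → sigma0 n = 0) := by
  rw [sigma0_eq_coeff_pentagonalSeries]
  refine ⟨fun i hi => ?_, fun hn => coeff_pentagonalSeries_eq_zero ℤ ?_⟩
  · rw [← pentagonal_neg_eq_iff.2 hi, coeff_pentagonalSeries_pentagonal, Int.coe_negOnePow,
      Int.natAbs_neg]
  · rintro ⟨k, rfl⟩
    exact hn ⟨-k, by rw [← pentagonal_neg_eq_iff, neg_neg]⟩
end

section
/- Define σ(n) = ∑_{j=0}^{n} σ_j(n - j), where σ_j(m) is the coefficient of x^m in ∏_{k≥1, k≠j}(1 - x^k) (with σ_0 for the full product). Then σ(n) is the coefficient of x^n in ∑_{h≥0} x^h ∏_{m≥1, m≠h}(1 - x^m), and for all n ≥ 0, ∑_{i ∈ ℤ} (-1)^i ρ(n - (3i² + i)/2) = σ(n), where ρ(m) = 0 for m < 0, ρ(0) = 1, and ρ(m) is the number of divisors of m for m ≥ 1. -/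
open Finset PowerSeries

section CommRing

variable {R : Type*} [CommRing R]

theorem coeff_mul_prod_one_sub_X_pow_of_lt {k : ℕ} (f : R⟦X⟧) {u : Finset ℕ}
    (hu : ∀ m ∈ u, k < m) : coeff k (f * ∏ m ∈ u, (1 - X ^ m)) = coeff k f := by
  induction u using Finset.induction_on generalizing f with
  | empty => simp
  | insert a u ha ih =>
    rw [prod_insert ha, ← mul_assoc, ih _ fun m hm => hu m (mem_insert_of_mem hm),
      mul_sub, mul_one, map_sub, coeff_mul_X_pow', if_neg (hu a (mem_insert_self a u)).not_ge,
      sub_zero]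

theorem coeff_prod_one_sub_X_pow_of_subset {k : ℕ} {s t : Finset ℕ} (hst : s ⊆ t)
    (h : ∀ m ∈ t, m ∉ s → k < m) :
    coeff k (∏ m ∈ t, (1 - X ^ m : R⟦X⟧)) = coeff k (∏ m ∈ s, (1 - X ^ m : R⟦X⟧)) := by
  rw [← prod_sdiff hst, mul_comm]
  exact coeff_mul_prod_one_sub_X_pow_of_lt _ fun m hm => h m (mem_sdiff.1 hm).1 (mem_sdiff.1 hm).2

theorem coeff_prod_Icc_erase_one_sub_X_pow {k N : ℕ} (j : ℕ) (hk : k ≤ N) :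
    coeff k (∏ m ∈ (Icc 1 N).erase j, (1 - X ^ m : R⟦X⟧)) =
      coeff k (∏ m ∈ (Icc 1 k).erase j, (1 - X ^ m : R⟦X⟧)) := by
  refine coeff_prod_one_sub_X_pow_of_subset (erase_subset_erase _ (Icc_subset_Icc_right hk)) ?_
  intro m hm hmk
  simp only [mem_erase, mem_Icc] at hm hmk
  omega

theorem coeff_prod_Icc_one_sub_X_pow_of_le {k N : ℕ} (hk : k ≤ N) :
    coeff k (∏ m ∈ Icc 1 N, (1 - X ^ m : R⟦X⟧)) =
      coeff k (∏ m ∈ Icc 1 k, (1 - X ^ m : R⟦X⟧)) := by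
  simpa using coeff_prod_Icc_erase_one_sub_X_pow (R := R) 0 hk

theorem coeff_prod_Icc_one_sub_X_pow {k N : ℕ} (hk : k ≤ N) :
    coeff k (∏ m ∈ Icc 1 N, (1 - X ^ m : R⟦X⟧)) = coeff k (pentagonalSeries R) := by
  obtain ⟨s, hs⟩ := Filter.eventually_atTop.1 (coeff_prod_one_sub_X_pow_eventually_eq R k)
  obtain ⟨M, hM⟩ : ∃ M, s ⊆ range M := ⟨s.sup id + 1, fun m hm =>
    mem_range.2 (Nat.lt_succ_of_le (le_sup (f := id) hm))⟩
  have hshift : ∏ i ∈ range (M + N), (1 - X ^ (i + 1) : R⟦X⟧) =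
      ∏ m ∈ Icc 1 (M + N), (1 - X ^ m) := by
    rw [range_eq_Ico, prod_Ico_add' (fun m => (1 - X ^ m : R⟦X⟧)), zero_add,
      Ico_add_one_right_eq_Icc]
  rw [← hs _ (hM.trans (range_subset_range.2 (Nat.le_add_right M N))), hshift,
    coeff_prod_Icc_one_sub_X_pow_of_le hk,
    coeff_prod_Icc_one_sub_X_pow_of_le (N := M + N) (by omega)]

theorem coeff_sum_C_mul_X_pow_pentagonal_neg {S : Finset ℤ} {n k : ℕ}
    (hS : ∀ i, pentagonal (-i) ≤ n → i ∈ S) (hk : k ≤ n) :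
    coeff k (∑ i ∈ S, C ((-1 : R) ^ i.natAbs) * X ^ pentagonal (-i)) =
      coeff k (pentagonalSeries R) := by
  simp only [map_sum, coeff_C_mul, coeff_X_pow]
  by_cases hpent : ∃ j, pentagonal j = k
  · obtain ⟨j, rfl⟩ := hpent
    rw [coeff_pentagonalSeries_pentagonal, Int.coe_negOnePow, sum_eq_single (-j)]
    · simp
    · intro i _ hij
      rw [if_neg fun h => hij (by have := pentagonal_inj.1 h; omega)]
      simp
    · intro hj
      exact absurd (hS (-j) (by simpa using hk)) hj
  · rw [coeff_pentagonalSeries_eq_zero R (by simpa using hpent)]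
    refine sum_eq_zero fun i _ => ?_
    rw [if_neg (fun h => hpent ⟨-i, h.symm⟩), mul_zero]

/-- For `0 < h`, this is `X ^ h / (1 - X ^ h) = ∑_{q ≥ 1} X ^ (q * h)`. -/
noncomputable def lambertTerm (h : ℕ) : R⟦X⟧ :=
  mk fun k => if 0 < k ∧ h ∣ k then 1 else 0

theorem one_sub_X_pow_mul_lambertTerm {h : ℕ} (hh : 0 < h) :
    (1 - X ^ h) * lambertTerm h = (X ^ h : R⟦X⟧) := by
  ext k
  rw [sub_mul, one_mul, map_sub, coeff_X_pow_mul', coeff_X_pow]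
  simp only [lambertTerm, coeff_mk]
  by_cases hk : h ≤ k
  · rw [if_pos hk]
    by_cases hkh : k = h
    · subst hkh
      simp [hh.ne']
    · have : h ∣ k - h ↔ h ∣ k := Nat.dvd_sub_iff_left hk dvd_rfl
      simp only [if_neg hkh, this, show 0 < k - h ↔ 0 < k by omega, show 0 < k by omega]
      ring
  · have hkh : k ≠ h := by omega
    simp only [if_neg hk, if_neg hkh, sub_zero]
    rw [if_neg]
    rintro ⟨hk0, hdvd⟩
    exact hk (Nat.le_of_dvd hk0 hdvd)

theorem X_pow_mul_prod_erase_one_sub_X_pow {s : Finset ℕ} {h : ℕ} (hs : h ∈ s) (hh : 0 < h) :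
    X ^ h * ∏ m ∈ s.erase h, (1 - X ^ m) = (∏ m ∈ s, (1 - X ^ m)) * (lambertTerm h : R⟦X⟧) := by
  have hunit : IsUnit (1 - X ^ h : R⟦X⟧) := by
    rw [isUnit_iff_constantCoeff]
    simp [hh.ne']
  apply hunit.mul_left_cancel
  rw [mul_left_comm, mul_prod_erase s (fun m => (1 - X ^ m : R⟦X⟧)) hs, mul_left_comm,
    one_sub_X_pow_mul_lambertTerm hh, mul_comm]

theorem sum_range_X_pow_mul_prod_erase_one_sub_X_pow (N : ℕ) :
    ∑ h ∈ range (N + 1), X ^ h * ∏ m ∈ (Icc 1 N).erase h, (1 - X ^ m) =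
      (∏ m ∈ Icc 1 N, (1 - X ^ m)) * (1 + ∑ h ∈ Icc 1 N, (lambertTerm h : R⟦X⟧)) := by
  rw [range_eq_Ico, sum_eq_sum_Ico_succ_bot (Nat.succ_pos N), zero_add, Nat.succ_eq_add_one,
    Ico_add_one_right_eq_Icc, pow_zero, one_mul, erase_eq_of_notMem (by simp), mul_add, mul_one,
    mul_sum]
  congr 1
  refine sum_congr rfl fun h hh => X_pow_mul_prod_erase_one_sub_X_pow hh ?_
  exact (mem_Icc.1 hh).1

theorem coeff_mul_congr {f f' g g' : R⟦X⟧} {n : ℕ} (hf : ∀ k ≤ n, coeff k f = coeff k f')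
    (hg : ∀ k ≤ n, coeff k g = coeff k g') : coeff n (f * g) = coeff n (f' * g') := by
  simp only [coeff_mul]
  refine sum_congr rfl fun p hp => ?_
  rw [HasAntidiagonal.mem_antidiagonal] at hp
  rw [hf p.1 (by omega), hg p.2 (by omega)]

end CommRing

theorem natAbs_le_pentagonal (i : ℤ) : i.natAbs ≤ pentagonal i := by
  have h := two_mul_natCast_pentagonal i
  zify
  rcases le_or_gt 0 i with hi | hi
  · rw [abs_of_nonneg hi]
    nlinarith
  · rw [abs_of_neg hi]
    nlinarith

theorem natCast_pentagonal_neg (i : ℤ) : (pentagonal (-i) : ℤ) = (3 * i ^ 2 + i) / 2 := by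
  have h := two_mul_natCast_pentagonal_neg i
  rw [show i * (3 * i + 1) = 3 * i ^ 2 + i by ring] at h
  omega

theorem coeff_one_add_sum_lambertTerm {k N : ℕ} (hk : k ≤ N) :
    coeff k (1 + ∑ h ∈ Icc 1 N, lambertTerm h : ℤ⟦X⟧) = rho k := by
  rcases Nat.eq_zero_or_pos k with rfl | hk0
  · simp [lambertTerm, rho]
  have hdiv : {h ∈ Icc 1 N | h ∣ k} = k.divisors := by
    ext d
    simp only [mem_filter, mem_Icc, Nat.mem_divisors]
    constructor
    · rintro ⟨-, hd⟩
      exact ⟨hd, hk0.ne'⟩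
    · rintro ⟨hd, -⟩
      exact ⟨⟨Nat.pos_of_dvd_of_pos hd hk0, (Nat.le_of_dvd hk0 hd).trans hk⟩, hd⟩
  simp [lambertTerm, rho, coeff_one, hk0, hk0.ne', ← hdiv]

theorem coeff_X_pow_mul_mk_rho (p n : ℕ) :
    coeff n (X ^ p * PowerSeries.mk rho) = rhoZ (n - p) := by
  rw [coeff_X_pow_mul', coeff_mk, rhoZ]
  split_ifs
  · congr
    omega
  · omega
  · omega
  · rfl

theorem sigmaSeq_eq_sum_coeff_X_pow_mul_prod_erase (n : ℕ) :
    sigmaSeq n = ∑ h ∈ range (n + 1),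
      coeff n (X ^ h * ∏ m ∈ (Icc 1 n).erase h, (1 - X ^ m : ℤ⟦X⟧)) := by
  refine sum_congr rfl fun h hh => ?_
  rw [coeff_X_pow_mul', if_pos (Nat.lt_succ_iff.1 (mem_range.1 hh)),
    coeff_prod_Icc_erase_one_sub_X_pow h (Nat.sub_le n h), sigmaJ]

/-- `σ(n) = ∑_{j=0}^{n} σ_j(n-j)` is the coefficient of `x^n` in
`∑_{h≥0} x^h ∏_{m≥1, m≠h}(1 - x^m)`, and the pentagonal algorithm holds:
`∑_{i ∈ ℤ} (-1)^i ρ(n - (3i²+i)/2) = σ(n)`, the sum over `i` being finite since `ρ`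
vanishes on negative arguments (indices with `|i| > n + 1` contribute nothing). -/
theorem stmt7 (n : ℕ) :
    sigmaSeq n =
      ∑ h ∈ Finset.range (n+1),
        PowerSeries.coeff (R := ℤ) n
          (PowerSeries.X ^ h * ∏ m ∈ (Finset.Icc 1 n).erase h, (1 - PowerSeries.X ^ m)) ∧
    ∑ i ∈ Finset.Icc (-(n : ℤ) - 1) ((n : ℤ) + 1),
        (-1) ^ i.natAbs * rhoZ ((n : ℤ) - (3 * i ^ 2 + i) / 2) = sigmaSeq n := by
  refine ⟨sigmaSeq_eq_sum_coeff_X_pow_mul_prod_erase n, ?_⟩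
  have hrange : ∀ i : ℤ, pentagonal (-i) ≤ n → i ∈ Icc (-(n : ℤ) - 1) (n + 1) := fun i hi => by
    have := natAbs_le_pentagonal (-i)
    rw [mem_Icc]
    omega
  calc ∑ i ∈ Icc (-(n : ℤ) - 1) (n + 1), (-1) ^ i.natAbs * rhoZ (n - (3 * i ^ 2 + i) / 2)
      = coeff n ((∑ i ∈ Icc (-(n : ℤ) - 1) (n + 1), C ((-1 : ℤ) ^ i.natAbs) * X ^ pentagonal (-i))
          * PowerSeries.mk rho) := by
        simp only [sum_mul, map_sum, mul_assoc, coeff_C_mul, coeff_X_pow_mul_mk_rho,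
          natCast_pentagonal_neg]
    _ = coeff n (pentagonalSeries ℤ * PowerSeries.mk rho) :=
        coeff_mul_congr (fun k hk => coeff_sum_C_mul_X_pow_pentagonal_neg hrange hk)
          fun _ _ => rfl
    _ = coeff n ((∏ m ∈ Icc 1 n, (1 - X ^ m)) * (1 + ∑ h ∈ Icc 1 n, lambertTerm h)) :=
        coeff_mul_congr (fun k hk => (coeff_prod_Icc_one_sub_X_pow hk).symm)
          fun k hk => by rw [coeff_one_add_sum_lambertTerm hk, coeff_mk]
    _ = sigmaSeq n := by
        rw [← sum_range_X_pow_mul_prod_erase_one_sub_X_pow, map_sum,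
          sigmaSeq_eq_sum_coeff_X_pow_mul_prod_erase]
end

section
/- For every n ≥ 0, the diagonal entry of the σ-matrix is nonnegative: σ_n(n) ≥ 0, where σ_n(n) is the coefficient of x^n in ∏_{m≥1, m≠n}(1 - x^m) (with σ_0(0) = 1). -/
namespace PowerSeries

variable {R : Type*} [CommRing R]

theorem coeff_mul_one_sub_X_pow_of_lt (f : R⟦X⟧) {n k : ℕ} (h : n < k) :
    coeff n (f * (1 - X ^ k)) = coeff n f := by
  rw [mul_sub, mul_one, map_sub, coeff_mul_X_pow', if_neg (not_le.2 h), sub_zero]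

theorem coeff_mul_prod_one_sub_X_pow_of_lt {ι : Type*} (f : R⟦X⟧) (s : Finset ι) (e : ι → ℕ)
    {n : ℕ} (h : ∀ i ∈ s, n < e i) :
    coeff n (f * ∏ i ∈ s, (1 - X ^ e i)) = coeff n f := by
  classical
  induction s using Finset.induction_on with
  | empty => rw [Finset.prod_empty, mul_one]
  | insert a s ha ih =>
    rw [Finset.prod_insert ha, mul_left_comm, mul_comm,
      coeff_mul_one_sub_X_pow_of_lt _ (h a (Finset.mem_insert_self a s)),
      ih fun i hi => h i (Finset.mem_insert_of_mem hi)]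

theorem prod_Icc_one_sub_X_pow_eq_prod_range (n : ℕ) :
    ∏ m ∈ Finset.Icc 1 n, (1 - X ^ m : R⟦X⟧) = ∏ i ∈ Finset.range n, (1 - X ^ (i + 1)) := by
  induction n with
  | zero => rfl
  | succ n ih => rw [Finset.prod_Icc_succ_top (by omega), ih, Finset.prod_range_succ]

theorem coeff_prod_Icc_one_sub_X_pow_eq_coeff_pentagonalSeries (n : ℕ) :
    coeff n (∏ m ∈ Finset.Icc 1 n, (1 - X ^ m : R⟦X⟧)) = coeff n (pentagonalSeries R) := by
  classical
  obtain ⟨s, hs⟩ := Filter.eventually_atTop.1 (coeff_prod_one_sub_X_pow_eventually_eq R n)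
  have hsub : Finset.range n ⊆ s ∪ Finset.range n := Finset.subset_union_right
  rw [← hs _ Finset.subset_union_left, ← Finset.prod_sdiff hsub, mul_comm,
    coeff_mul_prod_one_sub_X_pow_of_lt _ _ _ fun i hi => ?_, prod_Icc_one_sub_X_pow_eq_prod_range]
  have hin : i ∉ Finset.range n := (Finset.mem_sdiff.1 hi).2
  rw [Finset.mem_range, not_lt] at hin
  omega

theorem neg_one_le_coeff_pentagonalSeries (n : ℕ) : -1 ≤ coeff n (pentagonalSeries ℤ) := by
  by_cases h : n ∈ Set.range pentagonal
  · obtain ⟨k, rfl⟩ := h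
    rw [coeff_pentagonalSeries_pentagonal]
    rcases Int.units_eq_one_or k.negOnePow with h | h <;> rw [h] <;> decide
  · rw [coeff_pentagonalSeries_eq_zero ℤ h]
    decide

theorem constantCoeff_prod_one_sub_X_pow {ι : Type*} (s : Finset ι) (e : ι → ℕ)
    (h : ∀ i ∈ s, e i ≠ 0) : constantCoeff (∏ i ∈ s, (1 - X ^ e i : R⟦X⟧)) = 1 := by
  rw [map_prod]
  refine Finset.prod_eq_one fun i hi => ?_
  simp [h i hi]

end PowerSeries

open PowerSeries

theorem neg_one_le_sigma0 (n : ℕ) : -1 ≤ sigma0 n := by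
  rw [sigma0, coeff_prod_Icc_one_sub_X_pow_eq_coeff_pentagonalSeries]
  exact neg_one_le_coeff_pentagonalSeries n

theorem sigmaJ_self {n : ℕ} (hn : n ≠ 0) : sigmaJ n n = sigma0 n + 1 := by
  have hmem : n ∈ Finset.Icc 1 n := Finset.mem_Icc.2 ⟨Nat.one_le_iff_ne_zero.2 hn, le_rfl⟩
  have hconst : constantCoeff (∏ m ∈ (Finset.Icc 1 n).erase n, (1 - X ^ m : ℤ⟦X⟧)) = 1 :=
    constantCoeff_prod_one_sub_X_pow _ _ fun m hm =>
      Nat.one_le_iff_ne_zero.1 (Finset.mem_Icc.1 (Finset.mem_of_mem_erase hm)).1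
  rw [sigma0, ← Finset.mul_prod_erase _ _ hmem, sub_mul, one_mul, map_sub, coeff_X_pow_mul',
    if_pos le_rfl, Nat.sub_self, coeff_zero_eq_constantCoeff_apply, hconst, sigmaJ]
  ring

/-- Every diagonal entry of the σ-matrix is nonnegative: `σ_n(n) ≥ 0`. -/
theorem stmt9 (n : ℕ) : 0 ≤ sigmaJ n n := by
  rcases eq_or_ne n 0 with rfl | hn
  · simp [sigmaJ]
  · rw [sigmaJ_self hn]
    linarith [neg_one_le_sigma0 n]
end
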